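/- arXiv:2305.02891 — 2 statements merged into one kernel-verified Lean document; each statement's English description precedes it below -/
import Mathlib

section
/- In the metric measure space (ℝ, Euclidean distance, Lebesgue measure), let B = (0,1) ∪ (1,2) and A = (0,1). Then Per(A) + Per(B ∖ A) = 4 while Per(B) + 2·Per_B(A) = 2; in particular the inequality Per(A) + Per(B ∖ A) ≤ Per(B) + 2·Per_B(A) fails for this non-closed set B. -/
open MeasureTheory Metric Set Filter ENNReal NNReal Topology

variable {X : Type*} [PseudoMetricSpace X] [MeasurableSpace X]

/-- The asymptotic Lipschitz constant `lip_a f x = inf_{r>0} Lip(f|_{B_r(x)})`,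
computed in `ℝ≥0∞` via the optimal Lipschitz constant on each ball. -/
noncomputable def lipa (f : X → ℝ) (x : X) : ℝ≥0∞ :=
  ⨅ (r : ℝ) (_ : 0 < r), ⨆ (y : X) (_ : y ∈ ball x r) (z : X) (_ : z ∈ ball x r),
    edist (f y) (f z) / edist y z

/-- `f` is locally Lipschitz on the set `A`. -/
def LocLipOn (f : X → ℝ) (A : Set X) : Prop :=
  ∀ x ∈ A, ∃ r > 0, ball x r ⊆ A ∧ ∃ K : ℝ≥0, LipschitzOnWith K f (ball x r)

/-- `fn → f` in `L¹_loc(μ)`: convergence of the integrals of `|fn n - f|` on bounded sets. -/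
def TendstoL1loc (μ : Measure X) (fn : ℕ → X → ℝ) (f : X → ℝ) : Prop :=
  ∀ S : Set X, Bornology.IsBounded S →
    Tendsto (fun n => ∫⁻ x in S, ENNReal.ofReal |fn n x - f x| ∂μ) atTop (𝓝 0)

/-- Total variation `|Df|(A)` on an open set `A`. -/
noncomputable def totVarOpen (μ : Measure X) (f : X → ℝ) (A : Set X) : ℝ≥0∞ :=
  ⨅ (fn : ℕ → X → ℝ) (_ : ∀ n, LocLipOn (fn n) A) (_ : TendstoL1loc (μ.restrict A) fn f),
    atTop.liminf fun n => ∫⁻ x in A, lipa (fn n) x ∂μ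

/-- Total variation `|Df|(B)` of a Borel set `B`, by outer regularization over open sets. -/
noncomputable def totVar (μ : Measure X) (f : X → ℝ) (B : Set X) : ℝ≥0∞ :=
  ⨅ (A : Set X) (_ : IsOpen A) (_ : B ⊆ A), totVarOpen μ f A

/-- `Per(E; F) = |Dχ_E|_X(F)`. -/
noncomputable def perIn (μ : Measure X) (E F : Set X) : ℝ≥0∞ :=
  totVar μ (E.indicator 1) F

/-- `Per(E) = |Dχ_E|_X(X)`. -/
noncomputable def per (μ : Measure X) (E : Set X) : ℝ≥0∞ := perIn μ E univ

/-- `Per_B(E) = |Dχ_E|_B(B)`: the perimeter of `E` on `B`, computed in `(X, d, μ|_B)`. -/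
noncomputable def perOn (μ : Measure X) (B E : Set X) : ℝ≥0∞ :=
  totVar (μ.restrict B) (E.indicator 1) B

/-- `f ∈ BV(B)`: `f ∈ L¹(μ|_B)` and `|Df|_B(B) < ∞`. -/
def MemBV (μ : Measure X) (B : Set X) (f : X → ℝ) : Prop :=
  Integrable f (μ.restrict B) ∧ totVar (μ.restrict B) f B < ⊤

/-- `‖f‖_{BV(B)} = ‖f‖_{L¹(μ|_B)} + |Df|_B(B)`. -/
noncomputable def bvNorm (μ : Measure X) (B : Set X) (f : X → ℝ) : ℝ≥0∞ :=
  (∫⁻ x in B, ENNReal.ofReal |f x| ∂μ) + totVar (μ.restrict B) f B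

/-- `B` is a `BV`-extension set. -/
def IsBVExtensionSet (μ : Measure X) (B : Set X) : Prop :=
  ∃ C : ℝ, 0 < C ∧ ∀ f : X → ℝ, MemBV μ B f →
    ∃ g : X → ℝ, MemBV μ univ g ∧ EqOn g f B ∧
      bvNorm μ univ g ≤ ENNReal.ofReal C * bvNorm μ B f

/-- The functional `M_λ(A) = Per(A) + λ m(Ω \ A)`. -/
noncomputable def Mfun (μ : Measure X) (Ω : Set X) (lam : ℝ) (A : Set X) : ℝ≥0∞ :=
  per μ A + ENNReal.ofReal lam * μ (Ω \ A)


/-!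
A locally Lipschitz `f : ℝ → ℝ` is absolutely continuous and `|f'| ≤ lip_a f`, so
`|f b - f a| ≤ ∫_(a,b] lip_a f`. Any approximation of `χ_(u,v)` in `L¹_loc` is eventually close
to `0`, `1`, `0` at some points left of, inside and right of `(u,v)`, so it must climb and descend
by almost `1`: `Per((u,v)) ≥ 2`; trapezoids of slope `n + 1` give `Per((u,v)) ≤ 2`. The set `B`
differs from `(0,2)` by a null set, so `Per(B) = 2`, whereas `χ_A` is locally constant on the open
set `B` (its jump at `1` lies outside `B`), so `Per_B(A) = 0`.
-/

section LipA

variable {α : Type*} [PseudoMetricSpace α]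

theorem lipa_le_of_lipschitzOnWith {f : α → ℝ} {x : α} {r : ℝ} {K : ℝ≥0} (hr : 0 < r)
    (hf : LipschitzOnWith K f (ball x r)) : lipa f x ≤ K :=
  iInf₂_le_of_le r hr <| iSup₂_le fun _ hy => iSup₂_le fun _ hz =>
    ENNReal.div_le_of_le_mul (hf hy hz)

theorem lipa_eq_zero_of_eventually_eq {f : α → ℝ} {x : α} {c : ℝ}
    (hf : ∀ᶠ y in 𝓝 x, f y = c) : lipa f x = 0 := by
  obtain ⟨r, hr, hball⟩ := Metric.mem_nhds_iff.1 hf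
  have hconst : LipschitzOnWith 0 f (ball x r) := fun y hy z hz => by
    simp [show f y = c from hball hy, show f z = c from hball hz]
  simpa using lipa_le_of_lipschitzOnWith hr hconst

theorem LocLipOn.locallyLipschitz {f : α → ℝ} (hf : LocLipOn f univ) : LocallyLipschitz f :=
  fun x => by
    obtain ⟨r, hr, -, K, hK⟩ := hf x (mem_univ x)
    exact ⟨K, ball x r, ball_mem_nhds x hr, hK⟩

end LipA

theorem ofReal_abs_deriv_le_lipa (f : ℝ → ℝ) (x : ℝ) : ENNReal.ofReal |deriv f x| ≤ lipa f x := by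
  refine le_iInf₂ fun r hr => ?_
  set L := ⨆ y ∈ ball x r, ⨆ z ∈ ball x r, edist (f y) (f z) / edist y z
  rcases eq_top_or_lt_top L with hL | hL
  · simp [hL]
  have hlip : LipschitzOnWith L.toNNReal f (ball x r) := fun y hy z hz => by
    rcases eq_or_ne y z with rfl | hyz
    · simp
    have hq : edist (f y) (f z) / edist y z ≤ L := le_iSup₂_of_le y hy (le_iSup₂_of_le z hz le_rfl)
    rwa [ENNReal.div_le_iff (edist_pos.2 hyz).ne' (edist_ne_top y z),
      ← ENNReal.coe_toNNReal hL.ne] at hq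
  calc ENNReal.ofReal |deriv f x| ≤ L.toNNReal := by
        rw [← Real.norm_eq_abs, ENNReal.ofReal_le_iff_le_toReal ENNReal.coe_ne_top]
        exact norm_deriv_le_of_lipschitzOn (ball_mem_nhds x hr) hlip
    _ = L := ENNReal.coe_toNNReal hL.ne

theorem ofReal_abs_sub_le_setLIntegral_lipa {f : ℝ → ℝ} (hf : LocallyLipschitz f) {a b : ℝ}
    (hab : a ≤ b) : ENNReal.ofReal |f b - f a| ≤ ∫⁻ x in Ioc a b, lipa f x := by
  obtain ⟨K, hK⟩ := (hf.locallyLipschitzOn (s := uIcc a b)).exists_lipschitzOnWith_of_compact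
    isCompact_uIcc
  have hac := hK.absolutelyContinuousOnInterval
  calc ENNReal.ofReal |f b - f a| ≤ ENNReal.ofReal (∫ x in a..b, |deriv f x|) := by
        rw [← hac.integral_deriv_eq_sub]
        exact ENNReal.ofReal_le_ofReal (intervalIntegral.abs_integral_le_integral_abs hab)
    _ = ∫⁻ x in Ioc a b, ENNReal.ofReal |deriv f x| := by
        rw [intervalIntegral.integral_of_le hab]
        exact ofReal_integral_eq_lintegral_ofReal
          ((hac.intervalIntegrable_deriv.abs).1) (ae_of_all _ fun _ => abs_nonneg _)
    _ ≤ ∫⁻ x in Ioc a b, lipa f x := lintegral_mono fun x => ofReal_abs_deriv_le_lipa f x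

theorem ofReal_abs_sub_add_abs_sub_le_lintegral_lipa {f : ℝ → ℝ} (hf : LocallyLipschitz f)
    {x y z : ℝ} (hxy : x ≤ y) (hyz : y ≤ z) :
    ENNReal.ofReal (|f y - f x| + |f z - f y|) ≤ ∫⁻ t, lipa f t :=
  calc ENNReal.ofReal (|f y - f x| + |f z - f y|)
      ≤ ENNReal.ofReal |f y - f x| + ENNReal.ofReal |f z - f y| := ENNReal.ofReal_add_le
    _ ≤ (∫⁻ t in Ioc x y, lipa f t) + ∫⁻ t in Ioc y z, lipa f t :=
        add_le_add (ofReal_abs_sub_le_setLIntegral_lipa hf hxy)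
          (ofReal_abs_sub_le_setLIntegral_lipa hf hyz)
    _ = ∫⁻ t in Ioc x y ∪ Ioc y z, lipa f t :=
        (lintegral_union measurableSet_Ioc (Ioc_disjoint_Ioc_of_le le_rfl)).symm
    _ ≤ ∫⁻ t, lipa f t := setLIntegral_le_lintegral _ _

theorem exists_lt_of_setLIntegral_lt {β : Type*} [MeasurableSpace β] {μ : Measure β} {s : Set β}
    (hs : MeasurableSet s) {F : β → ℝ≥0∞} {c : ℝ≥0∞} (h : ∫⁻ x in s, F x ∂μ < c * μ s) :
    ∃ x ∈ s, F x < c := by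
  by_contra! hF
  refine h.not_ge ?_
  calc c * μ s = ∫⁻ _ in s, c ∂μ := (setLIntegral_const s c).symm
    _ ≤ ∫⁻ x in s, F x ∂μ := setLIntegral_mono' hs hF

theorem ofReal_le_liminf_of_forall_sub_le {u : ℕ → ℝ≥0∞} {c : ℝ}
    (h : ∀ ε > 0, ∀ᶠ n in atTop, ENNReal.ofReal (c - ε) ≤ u n) :
    ENNReal.ofReal c ≤ atTop.liminf u := by
  have hlim : Tendsto (fun ε => ENNReal.ofReal (c - ε)) (𝓝[>] 0) (𝓝 (ENNReal.ofReal c)) := by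
    have : Tendsto (fun ε : ℝ => c - ε) (𝓝 0) (𝓝 c) := by
      simpa using tendsto_const_nhds.sub (tendsto_id (x := 𝓝 (0 : ℝ)))
    exact ENNReal.tendsto_ofReal (this.mono_left nhdsWithin_le_nhds)
  refine le_of_tendsto hlim ?_
  filter_upwards [self_mem_nhdsWithin] with ε hε
  exact le_liminf_of_le (by isBoundedDefault) (h ε hε)

theorem TendstoL1loc.eventually_exists_abs_sub_lt {fn : ℕ → ℝ → ℝ} {g : ℝ → ℝ}
    (hfn : TendstoL1loc volume fn g) {a b c ε : ℝ} (hab : a < b) (hε : 0 < ε)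
    (hg : ∀ x ∈ Ioo a b, g x = c) : ∀ᶠ n in atTop, ∃ x ∈ Ioo a b, |fn n x - c| < ε := by
  have hpos : 0 < ENNReal.ofReal ε * volume (Ioo a b) := by
    simp [Real.volume_Ioo, hε, hab]
  filter_upwards [(hfn _ (isBounded_Ioo a b)).eventually_lt_const hpos] with n hn
  rw [setLIntegral_congr_fun measurableSet_Ioo fun x hx => by rw [hg x hx]] at hn
  obtain ⟨x, hx, hlt⟩ := exists_lt_of_setLIntegral_lt measurableSet_Ioo hn
  exact ⟨x, hx, (ENNReal.ofReal_lt_ofReal_iff hε).1 hlt⟩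

theorem per_eq_totVarOpen_univ (μ : Measure X) (E : Set X) :
    per μ E = totVarOpen μ (E.indicator 1) univ :=
  le_antisymm (iInf₂_le_of_le univ isOpen_univ (iInf_le _ subset_rfl))
    (le_iInf₂ fun A _ => le_iInf fun hA => by rw [univ_subset_iff.1 hA])

theorem two_le_per_Ioo {u v : ℝ} (huv : u < v) : 2 ≤ per volume (Ioo u v) := by
  rw [per_eq_totVarOpen_univ]
  refine le_iInf₂ fun fn hloc => le_iInf fun hconv => ?_
  rw [Measure.restrict_univ] at hconv
  have h0 : ∀ x ∈ Ioo (u - 1) u ∪ Ioo v (v + 1), (Ioo u v).indicator 1 x = (0 : ℝ) := by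
    intro x hx
    refine indicator_of_notMem (fun hx' => ?_) _
    rcases hx with hx | hx <;> linarith [hx.1, hx.2, hx'.1, hx'.2]
  have h1 : ∀ x ∈ Ioo u v, (Ioo u v).indicator 1 x = (1 : ℝ) :=
    fun x hx => indicator_of_mem hx _
  simp_rw [setLIntegral_univ]
  rw [← ENNReal.ofReal_ofNat]
  refine ofReal_le_liminf_of_forall_sub_le fun ε hε => ?_
  filter_upwards
    [hconv.eventually_exists_abs_sub_lt (ε := ε / 4) (by linarith) (by positivity)
        fun x hx => h0 x (.inl hx),
      hconv.eventually_exists_abs_sub_lt (ε := ε / 4) huv (by positivity) h1,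
      hconv.eventually_exists_abs_sub_lt (ε := ε / 4) (by linarith) (by positivity)
        fun x hx => h0 x (.inr hx)]
    with n ⟨x, hx, hfx⟩ ⟨y, hy, hfy⟩ ⟨z, hz, hfz⟩
  calc ENNReal.ofReal (2 - ε) ≤ ENNReal.ofReal (|fn n y - fn n x| + |fn n z - fn n y|) := by
        refine ENNReal.ofReal_le_ofReal ?_
        rw [abs_lt] at hfx hfy hfz
        linarith [le_abs_self (fn n y - fn n x), neg_abs_le (fn n z - fn n y)]
    _ ≤ ∫⁻ t, lipa (fn n) t :=
        ofReal_abs_sub_add_abs_sub_le_lintegral_lipa (hloc n).locallyLipschitz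
          (hx.2.trans hy.1).le (hy.2.trans hz.1).le

section Trapezoid

variable (u v : ℝ) {k : ℝ}

def trapezoid (k x : ℝ) : ℝ := max 0 (min (k * min (x - u) (v - x)) 1)

def trapezoidRamp (k : ℝ) : Set ℝ := Icc u (u + k⁻¹) ∪ Icc (v - k⁻¹) v

theorem measurableSet_trapezoidRamp : MeasurableSet (trapezoidRamp u v k) :=
  measurableSet_Icc.union measurableSet_Icc

theorem lipschitzWith_trapezoid (hk : 0 ≤ k) : LipschitzWith k.toNNReal (trapezoid u v k) := by
  have hclamp : LipschitzWith 1 fun y : ℝ => max 0 (min y 1) :=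
    (LipschitzWith.id.min_const 1).const_max 0
  have hramp : LipschitzWith k.toNNReal fun x => k * min (x - u) (v - x) :=
    LipschitzWith.of_dist_le_mul fun x y => by
      rw [Real.dist_eq, Real.dist_eq, Real.coe_toNNReal _ hk, ← mul_sub, abs_mul, abs_of_nonneg hk]
      have := abs_min_sub_min_le_max (x - u) (v - x) (y - u) (v - y)
      rw [sub_sub_sub_cancel_right, _root_.sub_sub_sub_cancel_left, abs_sub_comm y x,
        max_self] at this
      gcongr
  have := hclamp.comp hramp
  rwa [one_mul] at this

theorem trapezoid_mem_Icc (x : ℝ) : trapezoid u v k x ∈ Icc 0 1 :=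
  ⟨le_max_left _ _, max_le zero_le_one (min_le_right _ _)⟩

theorem trapezoid_eq_zero (hk : 0 ≤ k) {x : ℝ} (hx : x ≤ u ∨ v ≤ x) : trapezoid u v k x = 0 := by
  have : min (x - u) (v - x) ≤ 0 := by
    rcases hx with hx | hx
    · exact (min_le_left _ _).trans (by linarith)
    · exact (min_le_right _ _).trans (by linarith)
  exact max_eq_left ((min_le_left _ _).trans (mul_nonpos_of_nonneg_of_nonpos hk this))

theorem trapezoid_eq_one (hk : 0 < k) {x : ℝ} (hu : u + k⁻¹ ≤ x) (hv : x ≤ v - k⁻¹) :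
    trapezoid u v k x = 1 := by
  have : 1 ≤ k * min (x - u) (v - x) := by
    have hmin : k⁻¹ ≤ min (x - u) (v - x) := le_min (by linarith) (by linarith)
    simpa [mul_inv_cancel₀ hk.ne'] using mul_le_mul_of_nonneg_left hmin hk.le
  simp [trapezoid, min_eq_right this]

theorem trapezoid_eventually_eq_indicator (hk : 0 < k) {x : ℝ} (hx : x ∉ trapezoidRamp u v k) :
    ∀ᶠ y in 𝓝 x, trapezoid u v k y = (Ioo u v).indicator 1 x := by
  simp only [trapezoidRamp, mem_union, mem_Icc, not_or, not_and_or, not_le] at hx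
  rcases lt_or_ge x u with hxu | hxu
  · rw [indicator_of_notMem fun h => (h.1.trans hxu).false]
    filter_upwards [Iio_mem_nhds hxu] with y hy
    exact trapezoid_eq_zero u v hk.le (.inl (le_of_lt hy))
  rcases lt_or_ge v x with hvx | hvx
  · rw [indicator_of_notMem fun h => (h.2.trans hvx).false]
    filter_upwards [Ioi_mem_nhds hvx] with y hy
    exact trapezoid_eq_zero u v hk.le (.inr (le_of_lt hy))
  have hx₁ : u + k⁻¹ < x := hx.1.resolve_left (not_lt.2 hxu)
  have hx₂ : x < v - k⁻¹ := hx.2.resolve_right (not_lt.2 hvx)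
  have hmem : x ∈ Ioo u v := ⟨by linarith [inv_pos.2 hk], by linarith [inv_pos.2 hk]⟩
  rw [indicator_of_mem hmem, Pi.one_apply]
  filter_upwards [Ioo_mem_nhds hx₁ hx₂] with y hy
  exact trapezoid_eq_one u v hk hy.1.le hy.2.le

theorem volume_trapezoidRamp_le :
    volume (trapezoidRamp u v k) ≤ 2 * ENNReal.ofReal k⁻¹ := by
  refine (measure_union_le _ _).trans ?_
  simp [Real.volume_Icc, two_mul]

theorem lintegral_lipa_trapezoid_le (hk : 0 < k) : ∫⁻ x, lipa (trapezoid u v k) x ≤ 2 := by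
  have hlipa : ∀ x, lipa (trapezoid u v k) x ≤
      (trapezoidRamp u v k).indicator (fun _ => ENNReal.ofReal k) x := by
    intro x
    by_cases hx : x ∈ trapezoidRamp u v k
    · rw [indicator_of_mem hx]
      exact lipa_le_of_lipschitzOnWith one_pos (lipschitzWith_trapezoid u v hk.le).lipschitzOnWith
    · rw [lipa_eq_zero_of_eventually_eq (trapezoid_eventually_eq_indicator u v hk hx)]
      exact zero_le
  calc ∫⁻ x, lipa (trapezoid u v k) x
      ≤ ∫⁻ x, (trapezoidRamp u v k).indicator (fun _ => ENNReal.ofReal k) x := lintegral_mono hlipa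
    _ = ENNReal.ofReal k * volume (trapezoidRamp u v k) := by
        rw [lintegral_indicator_const (measurableSet_trapezoidRamp u v)]
    _ ≤ ENNReal.ofReal k * (2 * ENNReal.ofReal k⁻¹) := by
        gcongr; exact volume_trapezoidRamp_le u v
    _ = 2 := by
        rw [mul_left_comm, ← ENNReal.ofReal_mul hk.le, mul_inv_cancel₀ hk.ne', ENNReal.ofReal_one,
          mul_one]

theorem lintegral_abs_trapezoid_sub_indicator_le (hk : 0 < k) :
    ∫⁻ x, ENNReal.ofReal |trapezoid u v k x - (Ioo u v).indicator 1 x| ≤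
      2 * ENNReal.ofReal k⁻¹ := by
  have hle : ∀ x, ENNReal.ofReal |trapezoid u v k x - (Ioo u v).indicator 1 x| ≤
      (trapezoidRamp u v k).indicator 1 x := by
    intro x
    by_cases hx : x ∈ trapezoidRamp u v k
    · rw [indicator_of_mem hx, Pi.one_apply, ← ENNReal.ofReal_one]
      have h₁ := trapezoid_mem_Icc u v (k := k) x
      have h₂ : (Ioo u v).indicator (1 : ℝ → ℝ) x ∈ Icc 0 1 := by
        by_cases h : x ∈ Ioo u v <;> simp [h]
      exact ENNReal.ofReal_le_ofReal
        (abs_sub_le_iff.2 ⟨by linarith [h₁.2, h₂.1], by linarith [h₁.1, h₂.2]⟩)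
    · rw [(trapezoid_eventually_eq_indicator u v hk hx).self_of_nhds]
      simp
  calc ∫⁻ x, ENNReal.ofReal |trapezoid u v k x - (Ioo u v).indicator 1 x|
      ≤ ∫⁻ x, (trapezoidRamp u v k).indicator 1 x := lintegral_mono hle
    _ = volume (trapezoidRamp u v k) := lintegral_indicator_one (measurableSet_trapezoidRamp u v)
    _ ≤ 2 * ENNReal.ofReal k⁻¹ := volume_trapezoidRamp_le u v

end Trapezoid

theorem per_Ioo_le_two (u v : ℝ) : per volume (Ioo u v) ≤ 2 := by
  set fn : ℕ → ℝ → ℝ := fun n => trapezoid u v (n + 1)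
  have hk : ∀ n : ℕ, (0 : ℝ) < n + 1 := fun n => by positivity
  have hloc : ∀ n, LocLipOn (fn n) univ := fun n x _ =>
    ⟨1, one_pos, subset_univ _, _, (lipschitzWith_trapezoid u v (hk n).le).lipschitzOnWith⟩
  have hconv : TendstoL1loc (volume.restrict univ) fn ((Ioo u v).indicator 1) := by
    intro S _
    have hlim : Tendsto (fun n : ℕ => 2 * ENNReal.ofReal ((n : ℝ) + 1)⁻¹) atTop (𝓝 0) := by
      have h : Tendsto (fun n : ℕ => ENNReal.ofReal ((n : ℝ) + 1)⁻¹) atTop (𝓝 0) := by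
        simpa using ENNReal.tendsto_ofReal tendsto_one_div_add_atTop_nhds_zero_nat
      simpa using ENNReal.Tendsto.const_mul h (.inr ENNReal.ofNat_ne_top)
    refine tendsto_of_tendsto_of_tendsto_of_le_of_le tendsto_const_nhds hlim (fun _ => zero_le)
      fun n => ?_
    rw [Measure.restrict_univ]
    exact (setLIntegral_le_lintegral _ _).trans
      (lintegral_abs_trapezoid_sub_indicator_le u v (hk n))
  rw [per_eq_totVarOpen_univ]
  refine iInf₂_le_of_le fn hloc (iInf_le_of_le hconv ?_)
  simp_rw [setLIntegral_univ]
  exact liminf_le_of_frequently_le' (.of_forall fun n => lintegral_lipa_trapezoid_le u v (hk n))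

theorem per_Ioo {u v : ℝ} (huv : u < v) : per volume (Ioo u v) = 2 :=
  le_antisymm (per_Ioo_le_two u v) (two_le_per_Ioo huv)

theorem totVarOpen_congr_ae {μ : Measure X} {f g : X → ℝ} (hfg : f =ᵐ[μ] g) (A : Set X) :
    totVarOpen μ f A = totVarOpen μ g A := by
  have hconv : ∀ fn, TendstoL1loc (μ.restrict A) fn f ↔ TendstoL1loc (μ.restrict A) fn g := by
    refine fun fn => forall₂_congr fun S _ => ?_
    have hS : ∀ n, ∫⁻ x in S, ENNReal.ofReal |fn n x - f x| ∂μ.restrict A =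
        ∫⁻ x in S, ENNReal.ofReal |fn n x - g x| ∂μ.restrict A := fun n =>
      lintegral_congr_ae <| ae_restrict_of_ae <| ae_restrict_of_ae <|
        hfg.mono fun x hx => by simp only [hx]
    simp_rw [hS]
  simp_rw [totVarOpen, hconv]

theorem per_congr_ae {μ : Measure X} {E F : Set X} (hEF : E =ᵐ[μ] F) : per μ E = per μ F := by
  simp_rw [per_eq_totVarOpen_univ]
  exact totVarOpen_congr_ae (indicator_ae_eq_of_ae_eq_set hEF) univ

theorem totVar_restrict_eq_zero_of_eventually_eq [OpensMeasurableSpace X] {μ : Measure X}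
    {f : X → ℝ} {B : Set X} (hB : IsOpen B) (hf : ∀ x ∈ B, ∀ᶠ y in 𝓝 x, f y = f x) :
    totVar (μ.restrict B) f B = 0 := by
  have hloc : LocLipOn f B := fun x hx => by
    obtain ⟨r, hr, hball⟩ := Metric.mem_nhds_iff.1 (inter_mem (hB.mem_nhds hx) (hf x hx))
    refine ⟨r, hr, fun y hy => (hball hy).1, 0, fun y hy z hz => ?_⟩
    simp [show f y = f x from (hball hy).2, show f z = f x from (hball hz).2]
  have hconv : TendstoL1loc ((μ.restrict B).restrict B) (fun _ => f) f := fun S _ => by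
    simp
  have hlipa : ∫⁻ x in B, lipa f x ∂μ.restrict B = 0 :=
    (setLIntegral_congr_fun hB.measurableSet fun x hx =>
      lipa_eq_zero_of_eventually_eq (hf x hx)).trans lintegral_zero
  refine nonpos_iff_eq_zero.1 (iInf₂_le_of_le B hB (iInf_le_of_le subset_rfl ?_))
  refine iInf₂_le_of_le (fun _ => f) (fun _ => hloc) (iInf_le_of_le hconv ?_)
  simp [hlipa]

theorem perOn_union_eq_zero [OpensMeasurableSpace X] (μ : Measure X) {A C : Set X}
    (hA : IsOpen A) (hC : IsOpen C) (hAC : Disjoint A C) : perOn μ (A ∪ C) A = 0 := by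
  refine totVar_restrict_eq_zero_of_eventually_eq (hA.union hC) ?_
  rintro x (hx | hx)
  · filter_upwards [hA.mem_nhds hx] with y hy
    simp only [indicator_of_mem hx, indicator_of_mem hy, Pi.one_apply]
  · filter_upwards [hC.mem_nhds hx] with y hy
    rw [indicator_of_notMem (hAC.notMem_of_mem_right hx),
      indicator_of_notMem (hAC.notMem_of_mem_right hy)]

theorem Ioo_union_Ioo_ae_eq_Ioo (μ : Measure ℝ) [NullSingletonClass μ] {a b c : ℝ} (hab : a ≤ b)
    (hbc : b ≤ c) : (Ioo a b ∪ Ioo b c : Set ℝ) =ᵐ[μ] Ioo a c := by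
  refine ae_eq_set.2 ⟨measure_mono_null (fun x hx => ?_) measure_empty,
    measure_mono_null (fun x hx => ?_) (measure_singleton b)⟩
  · simp only [Set.mem_sdiff, mem_union, mem_Ioo] at hx; grind
  · simp only [Set.mem_sdiff, mem_union, mem_Ioo, mem_singleton_iff] at hx ⊢; grind

/-- In `(ℝ, d_eucl, Leb)`, with `B = (0,1) ∪ (1,2)` and `A = (0,1)`:
`Per(A) + Per(B \ A) = 4`, `Per(B) + 2 Per_B(A) = 2`, and so the inequality
`Per(A) + Per(B \ A) ≤ Per(B) + 2 Per_B(A)` fails for this non-closed `B`. -/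
theorem perimeter_sum_fails_for_nonclosed :
    per (volume : Measure ℝ) (Ioo (0:ℝ) 1) +
        per (volume : Measure ℝ) ((Ioo (0:ℝ) 1 ∪ Ioo 1 2) \ Ioo 0 1) = 4 ∧
    per (volume : Measure ℝ) (Ioo (0:ℝ) 1 ∪ Ioo 1 2) +
        2 * perOn (volume : Measure ℝ) (Ioo (0:ℝ) 1 ∪ Ioo 1 2) (Ioo 0 1) = 2 ∧
    ¬ (per (volume : Measure ℝ) (Ioo (0:ℝ) 1) +
          per (volume : Measure ℝ) ((Ioo (0:ℝ) 1 ∪ Ioo 1 2) \ Ioo 0 1) ≤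
        per (volume : Measure ℝ) (Ioo (0:ℝ) 1 ∪ Ioo 1 2) +
          2 * perOn (volume : Measure ℝ) (Ioo (0:ℝ) 1 ∪ Ioo 1 2) (Ioo 0 1)) := by
  have hdisj : Disjoint (Ioo (0:ℝ) 1) (Ioo 1 2) :=
    disjoint_left.2 fun _ hx hx' => (hx.2.trans hx'.1).false
  rw [union_sdiff_left, hdisj.symm.sdiff_eq_left,
    per_congr_ae (Ioo_union_Ioo_ae_eq_Ioo _ zero_le_one one_le_two),
    perOn_union_eq_zero _ isOpen_Ioo isOpen_Ioo hdisj, per_Ioo one_pos, per_Ioo one_lt_two,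
    per_Ioo two_pos]
  norm_num
end

section
/- In the weighted plane (ℝ², d_eucl, m) described in the context, for every Borel set A ⊆ Ω of finite perimeter one has Per(A ∩ H; H) = Per(A; H), where H = ℝ×[0,∞) is the closed upper half-plane and Per(E;F) := |Dχ_E|_X(F). -/
/-!
Both inequalities are proved by gluing. An approximation `g` of one indicator on an open set
`U ⊇ H` and an approximation `v` of the other one below `H`, both truncated to `[0, 1]`, are
interpolated by a cutoff of slope `2/δ` across the band `-δ ≤ y ≤ -δ/2`. There the weight is at
most `δ`, and inside the open set `{y > -c/(1 + x²)} ⊇ H` the band has area `O(√(c δ))`, so the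
cutoff costs `O(√(c δ)) → 0`; above the band the glued function coincides with `g`, whose
energy on `U` is what is being compared.

For `Per(A ∩ H; H) ≤ Per(A; H)` one takes `v = 0`. For the converse, `v` is a bounded-energy
approximation of `χ_A` on the whole plane, which exists because `Per(A) < ∞`; what remains is
its energy in the band `-c < y ≤ -δ/2`. As `k ↦ liminf_j` (energy of `v_j` in `-2^{-k} < y < 0`)
is antitone and bounded, for a suitable `c = 2^{-k₀}` this energy is small along a subsequence.
-/

open MeasureTheory Metric Set Filter ENNReal NNReal Topology

variable {X : Type*} [PseudoMetricSpace X] [MeasurableSpace X]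

/-- The Euclidean plane `ℝ²`. -/
noncomputable abbrev Plane : Type := EuclideanSpace ℝ (Fin 2)

/-- The point `(a, b) ∈ ℝ²`. -/
noncomputable def pt (a b : ℝ) : Plane := WithLp.toLp 2 ![a, b]

/-- The model triangle `T = {(x,y) : y ≥ 0, y < x < 1 - y}`. -/
def Ttri : Set Plane := {p | 0 ≤ p 1 ∧ p 1 < p 0 ∧ p 0 < 1 - p 1}

/-- The triangle `c·T + (a, 0)`. -/
noncomputable def triAt (c a : ℝ) : Set Plane :=
  (fun p : Plane => pt (c * p 0 + a) (c * p 1)) '' Ttri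

/-- The triangle `T_n = 2^{-2n+1}·T + (2^{-2n+1}, 0)`. -/
noncomputable def Tn (n : ℕ) : Set Plane :=
  triAt ((2:ℝ) ^ (1 - 2 * (n:ℤ))) ((2:ℝ) ^ (1 - 2 * (n:ℤ)))

/-- The square `Q = (0,1) × (−1,0)`. -/
def Qset : Set Plane := {p | p 0 ∈ Ioo (0:ℝ) 1 ∧ p 1 ∈ Ioo (-1:ℝ) 0}

/-- The domain `Ω = Q ∪ ⋃_{n ≥ 1} T_n`. -/
noncomputable def Ωset : Set Plane := Qset ∪ ⋃ n : ℕ, Tn (n + 1)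

/-- The center `x_n = (2^{-2n+1} + 2^{-2n}, 0)` of the base of `T_n`. -/
noncomputable def xpt (n : ℕ) : Plane :=
  pt ((2:ℝ) ^ (1 - 2 * (n:ℤ)) + (2:ℝ) ^ (-2 * (n:ℤ))) 0

/-- The weight `w`. -/
noncomputable def wfun (p : Plane) : ℝ≥0∞ :=
  if p 1 ∈ Icc (-1:ℝ) 0 then
    ENNReal.ofReal (min 1 (infDist p {q : Plane | q 1 = -1 ∨ q 1 = 0}))
  else 1

/-- The weighted measure `m = w·L² + Σ_{n ≥ 1} 2^{-n} δ_{x_n}`. -/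
noncomputable def mws : Measure Plane :=
  volume.withDensity wfun +
    Measure.sum fun k : ℕ => ((2:ℝ≥0∞) ^ (k + 1))⁻¹ • Measure.dirac (xpt (k + 1))

/-- The closed upper half-plane `H = ℝ × [0, ∞)`. -/
def Hup : Set Plane := {p | 0 ≤ p 1}

section LipConst

variable {Y : Type*} [PseudoMetricSpace Y]

noncomputable def lipConstOn (f : Y → ℝ) (s : Set Y) : ℝ≥0∞ :=
  ⨆ (y : Y) (_ : y ∈ s) (z : Y) (_ : z ∈ s), edist (f y) (f z) / edist y z

lemma lipa_eq_iInf_lipConstOn (f : Y → ℝ) (x : Y) :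
    lipa f x = ⨅ (r : ℝ) (_ : 0 < r), lipConstOn f (ball x r) := rfl

lemma lipConstOn_le {f : Y → ℝ} {s : Set Y} {M : ℝ≥0∞}
    (h : ∀ y ∈ s, ∀ z ∈ s, edist (f y) (f z) / edist y z ≤ M) : lipConstOn f s ≤ M :=
  iSup₂_le fun y hy => iSup₂_le fun z hz => h y hy z hz

lemma le_lipConstOn (f : Y → ℝ) {s : Set Y} {y z : Y} (hy : y ∈ s) (hz : z ∈ s) :
    edist (f y) (f z) / edist y z ≤ lipConstOn f s :=
  le_iSup₂_of_le y hy (le_iSup₂_of_le z hz le_rfl)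

lemma lipConstOn_mono (f : Y → ℝ) {s t : Set Y} (hst : s ⊆ t) :
    lipConstOn f s ≤ lipConstOn f t :=
  lipConstOn_le fun _ hy _ hz => le_lipConstOn f (hst hy) (hst hz)

lemma lipConstOn_congr {f g : Y → ℝ} {s : Set Y} (h : EqOn f g s) :
    lipConstOn f s = lipConstOn g s := by
  unfold lipConstOn
  refine iSup_congr fun y => iSup_congr fun hy => iSup_congr fun z => iSup_congr fun hz => ?_
  rw [h hy, h hz]

lemma LipschitzOnWith.lipConstOn_le {f : Y → ℝ} {s : Set Y} {K : ℝ≥0}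
    (hf : LipschitzOnWith K f s) : lipConstOn f s ≤ K :=
  _root_.lipConstOn_le fun _ hy _ hz => ENNReal.div_le_of_le_mul (hf hy hz)

lemma lipa_le_lipConstOn (f : Y → ℝ) (x : Y) {r : ℝ} (hr : 0 < r) :
    lipa f x ≤ lipConstOn f (ball x r) :=
  iInf₂_le r hr

lemma upperSemicontinuous_lipa (f : Y → ℝ) : UpperSemicontinuous (lipa f) := by
  intro x M hM
  obtain ⟨r, hr, hrM⟩ : ∃ r, 0 < r ∧ lipConstOn f (ball x r) < M := by
    simpa only [lipa_eq_iInf_lipConstOn, iInf_lt_iff, exists_prop] using hM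
  filter_upwards [ball_mem_nhds x (half_pos hr)] with x' hx'
  calc lipa f x' ≤ lipConstOn f (ball x' (r / 2)) := lipa_le_lipConstOn f x' (half_pos hr)
    _ ≤ lipConstOn f (ball x r) := lipConstOn_mono f fun y hy => by
        rw [mem_ball] at hx' hy ⊢
        linarith [dist_triangle y x' x]
    _ < M := hrM

lemma measurable_lipa [MeasurableSpace Y] [OpensMeasurableSpace Y] (f : Y → ℝ) :
    Measurable (lipa f) :=
  (upperSemicontinuous_lipa f).measurable

lemma lipa_congr {f g : Y → ℝ} {x : Y} (h : f =ᶠ[𝓝 x] g) : lipa f x = lipa g x := by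
  suffices key : ∀ {f g : Y → ℝ}, f =ᶠ[𝓝 x] g → lipa f x ≤ lipa g x from
    le_antisymm (key h) (key h.symm)
  intro f g h
  obtain ⟨r, hr, hfg⟩ := Metric.eventually_nhds_iff_ball.1 h
  refine le_iInf₂ fun r' hr' => ?_
  calc lipa f x ≤ lipConstOn f (ball x (min r r')) := lipa_le_lipConstOn f x (lt_min hr hr')
    _ = lipConstOn g (ball x (min r r')) :=
        lipConstOn_congr fun y hy => hfg y (ball_subset_ball (min_le_left _ _) hy)
    _ ≤ lipConstOn g (ball x r') := lipConstOn_mono g (ball_subset_ball (min_le_right _ _))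

lemma lipa_const (c : ℝ) (x : Y) : lipa (fun _ => c) x = 0 :=
  le_antisymm ((lipa_le_lipConstOn _ x one_pos).trans
    ((LipschitzWith.const c).lipschitzOnWith.lipConstOn_le.trans_eq ENNReal.coe_zero)) zero_le

lemma LipschitzWith.lipa_le {f : Y → ℝ} {K : ℝ≥0} (hf : LipschitzWith K f) (x : Y) :
    lipa f x ≤ K :=
  (lipa_le_lipConstOn f x one_pos).trans hf.lipschitzOnWith.lipConstOn_le

lemma lipa_le_add_of_lipConstOn_le {f g h : Y → ℝ} {x : Y}
    (hle : ∀ s, lipConstOn h s ≤ lipConstOn f s + lipConstOn g s) :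
    lipa h x ≤ lipa f x + lipa g x := by
  simp_rw [lipa_eq_iInf_lipConstOn, ENNReal.iInf_add, ENNReal.add_iInf]
  refine le_iInf₂ fun r₁ hr₁ => le_iInf₂ fun r₂ hr₂ => ?_
  calc lipa h x ≤ lipConstOn h (ball x (min r₁ r₂)) := lipa_le_lipConstOn h x (lt_min hr₁ hr₂)
    _ ≤ lipConstOn f (ball x (min r₁ r₂)) + lipConstOn g (ball x (min r₁ r₂)) := hle _
    _ ≤ lipConstOn f (ball x r₁) + lipConstOn g (ball x r₂) := by
        gcongr <;> exact lipConstOn_mono _ (ball_subset_ball (by simp))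

lemma lipa_add_le (f g : Y → ℝ) (x : Y) :
    lipa (fun y => f y + g y) x ≤ lipa f x + lipa g x := by
  refine lipa_le_add_of_lipConstOn_le fun s => lipConstOn_le fun y hy z hz => ?_
  calc edist (f y + g y) (f z + g z) / edist y z
      ≤ (edist (f y) (f z) + edist (g y) (g z)) / edist y z := by
        gcongr; exact edist_add_add_le _ _ _ _
    _ = edist (f y) (f z) / edist y z + edist (g y) (g z) / edist y z := ENNReal.add_div
    _ ≤ lipConstOn f s + lipConstOn g s := by
        gcongr <;> exact le_lipConstOn _ hy hz

lemma edist_mul_mul_le_of_abs_le_one {a b c d : ℝ} (ha : |a| ≤ 1) (hd : |d| ≤ 1) :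
    edist (a * b) (c * d) ≤ edist a c + edist b d := by
  simp only [edist_dist, Real.dist_eq]
  rw [← ENNReal.ofReal_add (abs_nonneg _) (abs_nonneg _)]
  refine ENNReal.ofReal_le_ofReal ?_
  calc |a * b - c * d| = |a * (b - d) + (a - c) * d| := by ring_nf
    _ ≤ |a| * |b - d| + |a - c| * |d| := by
        rw [← abs_mul, ← abs_mul]; exact abs_add_le _ _
    _ ≤ |a - c| + |b - d| := by
        nlinarith [abs_nonneg (b - d), abs_nonneg (a - c)]

lemma lipa_mul_le {f g : Y → ℝ} (hf : ∀ y, |f y| ≤ 1) (hg : ∀ y, |g y| ≤ 1) (x : Y) :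
    lipa (fun y => f y * g y) x ≤ lipa f x + lipa g x := by
  refine lipa_le_add_of_lipConstOn_le fun s => lipConstOn_le fun y hy z hz => ?_
  calc edist (f y * g y) (f z * g z) / edist y z
      ≤ (edist (f y) (f z) + edist (g y) (g z)) / edist y z := by
        gcongr; exact edist_mul_mul_le_of_abs_le_one (hf y) (hg z)
    _ = edist (f y) (f z) / edist y z + edist (g y) (g z) / edist y z := ENNReal.add_div
    _ ≤ lipConstOn f s + lipConstOn g s := by
        gcongr <;> exact le_lipConstOn _ hy hz

lemma LipschitzWith.lipa_comp_le {φ : ℝ → ℝ} (hφ : LipschitzWith 1 φ) (f : Y → ℝ) (x : Y) :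
    lipa (fun y => φ (f y)) x ≤ lipa f x := by
  refine le_iInf₂ fun r hr => (lipa_le_lipConstOn _ x hr).trans ?_
  refine lipConstOn_le fun y hy z hz => le_trans ?_ (le_lipConstOn f hy hz)
  gcongr
  simpa using hφ (f y) (f z)

end LipConst

section LocLip

variable {Y : Type*} [PseudoMetricSpace Y]

lemma LocLipOn.mono {f : Y → ℝ} {A B : Set Y} (hf : LocLipOn f A) (hB : IsOpen B)
    (hBA : B ⊆ A) : LocLipOn f B := by
  intro x hx
  obtain ⟨r, hr, -, K, hK⟩ := hf x (hBA hx)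
  obtain ⟨r', hr', hr'B⟩ := Metric.isOpen_iff.1 hB x hx
  exact ⟨min r r', lt_min hr hr', (ball_subset_ball (min_le_right _ _)).trans hr'B, K,
    hK.mono (ball_subset_ball (min_le_left _ _))⟩

lemma LipschitzWith.locLipOn {f : Y → ℝ} {K : ℝ≥0} (hf : LipschitzWith K f) {A : Set Y}
    (hA : IsOpen A) : LocLipOn f A := by
  intro x hx
  obtain ⟨r, hr, hrA⟩ := Metric.isOpen_iff.1 hA x hx
  exact ⟨r, hr, hrA, K, hf.lipschitzOnWith⟩

lemma LipschitzWith.comp_locLipOn {φ : ℝ → ℝ} {K : ℝ≥0} (hφ : LipschitzWith K φ)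
    {f : Y → ℝ} {A : Set Y} (hf : LocLipOn f A) : LocLipOn (fun y => φ (f y)) A := by
  intro x hx
  obtain ⟨r, hr, hrA, L, hL⟩ := hf x hx
  exact ⟨r, hr, hrA, K * L, hφ.comp_lipschitzOnWith hL⟩

lemma LipschitzOnWith.mul_of_abs_le_one {f g : Y → ℝ} {s : Set Y} {K L : ℝ≥0}
    (hf : LipschitzOnWith K f s) (hg : LipschitzOnWith L g s)
    (hf1 : ∀ y, |f y| ≤ 1) (hg1 : ∀ y, |g y| ≤ 1) :
    LipschitzOnWith (K + L) (fun y => f y * g y) s := fun y hy z hz =>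
  calc edist (f y * g y) (f z * g z) ≤ edist (f y) (f z) + edist (g y) (g z) :=
        edist_mul_mul_le_of_abs_le_one (hf1 y) (hg1 z)
    _ ≤ K * edist y z + L * edist y z := add_le_add (hf hy hz) (hg hy hz)
    _ = (K + L) * edist y z := by ring

lemma LocLipOn.map₂ {f g h : Y → ℝ} {A : Set Y} (hf : LocLipOn f A) (hg : LocLipOn g A)
    (hh : ∀ (s : Set Y) (K L : ℝ≥0), LipschitzOnWith K f s → LipschitzOnWith L g s →
      ∃ M : ℝ≥0, LipschitzOnWith M h s) : LocLipOn h A := by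
  intro x hx
  obtain ⟨r, hr, hrA, K, hK⟩ := hf x hx
  obtain ⟨r', hr', -, L, hL⟩ := hg x hx
  refine ⟨min r r', lt_min hr hr', (ball_subset_ball (min_le_left _ _)).trans hrA, ?_⟩
  exact hh _ K L (hK.mono (ball_subset_ball (min_le_left _ _)))
    (hL.mono (ball_subset_ball (min_le_right _ _)))

lemma LocLipOn.add {f g : Y → ℝ} {A : Set Y} (hf : LocLipOn f A) (hg : LocLipOn g A) :
    LocLipOn (fun y => f y + g y) A :=
  hf.map₂ hg fun _ K L hK hL => ⟨K + L, hK.add hL⟩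

lemma LocLipOn.mul_of_abs_le_one {f g : Y → ℝ} {A : Set Y} (hf : LocLipOn f A)
    (hg : LocLipOn g A) (hf1 : ∀ y, |f y| ≤ 1) (hg1 : ∀ y, |g y| ≤ 1) :
    LocLipOn (fun y => f y * g y) A :=
  hf.map₂ hg fun _ K L hK hL => ⟨K + L, hK.mul_of_abs_le_one hL hf1 hg1⟩

end LocLip

lemma TendstoL1loc.mono {μ ν : Measure X} {fn : ℕ → X → ℝ} {f : X → ℝ}
    (h : TendstoL1loc μ fn f) (hνμ : ν ≤ μ) : TendstoL1loc ν fn f := fun S hS =>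
  tendsto_of_tendsto_of_tendsto_of_le_of_le tendsto_const_nhds (h S hS) (fun _ => zero_le)
    fun _ => lintegral_mono' (Measure.restrict_mono subset_rfl hνμ) le_rfl

lemma totVar_le_totVarOpen {μ : Measure X} {f : X → ℝ} {A B : Set X} (hA : IsOpen A)
    (hBA : B ⊆ A) : totVar μ f B ≤ totVarOpen μ f A :=
  iInf₂_le_of_le A hA (iInf_le _ hBA)

lemma totVarOpen_le_liminf {μ : Measure X} {f : X → ℝ} {A : Set X} {fn : ℕ → X → ℝ}
    (hfn : ∀ n, LocLipOn (fn n) A) (hconv : TendstoL1loc (μ.restrict A) fn f) :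
    totVarOpen μ f A ≤ atTop.liminf fun n => ∫⁻ x in A, lipa (fn n) x ∂μ :=
  iInf₂_le_of_le fn hfn (iInf_le _ hconv)

lemma totVar_le_totVar_add {μ : Measure X} {f f' : X → ℝ} {B : Set X} {e : ℝ≥0∞}
    (h : ∀ A, IsOpen A → B ⊆ A → ∀ fn : ℕ → X → ℝ, (∀ n, LocLipOn (fn n) A) →
      TendstoL1loc (μ.restrict A) fn f' →
      totVar μ f B ≤ (atTop.liminf fun n => ∫⁻ x in A, lipa (fn n) x ∂μ) + e) :
    totVar μ f B ≤ totVar μ f' B + e := by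
  simp_rw [totVar, totVarOpen, ENNReal.iInf_add]
  exact le_iInf₂ fun A hA => le_iInf fun hBA => le_iInf₂ fun fn hfn => le_iInf fun hconv =>
    h A hA hBA fn hfn hconv

lemma exists_seq_lintegral_lipa_le_of_totVar_lt_top {μ : Measure X} {f : X → ℝ}
    (h : totVar μ f univ < ⊤) :
    ∃ (u : ℕ → X → ℝ) (P : ℝ≥0∞), P ≠ ⊤ ∧ (∀ n, LocLipOn (u n) univ) ∧
      TendstoL1loc μ u f ∧ ∀ n, ∫⁻ x, lipa (u n) x ∂μ ≤ P := by
  simp only [totVar, totVarOpen, iInf_lt_iff, univ_subset_iff] at h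
  obtain ⟨_, -, rfl, u, hu, hconv, hlt⟩ := h
  rw [Measure.restrict_univ] at hconv hlt
  obtain ⟨P, hlt, hP⟩ := exists_between hlt
  obtain ⟨φ, hφ, hφP⟩ := extraction_of_frequently_atTop
    (frequently_lt_of_liminf_lt (by isBoundedDefault) hlt)
  exact ⟨u ∘ φ, P, hP.ne, fun n => hu (φ n),
    fun S hS => (hconv S hS).comp hφ.tendsto_atTop, fun n => (hφP n).le⟩

lemma liminf_le_liminf_add_of_tendsto {E G τ : ℕ → ℝ≥0∞} {B : ℝ≥0∞}
    (hτ : Tendsto τ atTop (𝓝 0)) (h : ∀ᶠ n in atTop, E n ≤ G n + B + τ n) :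
    atTop.liminf E ≤ atTop.liminf G + B := by
  refine ENNReal.le_of_forall_pos_le_add fun ε hε _ => ?_
  have hE : ∀ᶠ n in atTop, E n ≤ G n + (B + ε) := by
    filter_upwards [h, hτ.eventually_lt_const (ENNReal.coe_pos.2 hε)] with n hn hτn
    exact hn.trans (by rw [← add_assoc]; gcongr)
  calc atTop.liminf E ≤ atTop.liminf fun n => G n + (B + ε) := liminf_le_liminf hE
    _ = atTop.liminf G + B + ε := by
        rw [liminf_add_const atTop G _ (by isBoundedDefault) (by isBoundedDefault), add_assoc]

/-- `k ↦ liminf_j a j k` is antitone and bounded, hence almost constant from some `k₀` on. -/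
lemma eventually_forall_frequently_le_add {a : ℕ → ℕ → ℝ≥0∞} (ha : ∀ j, Antitone (a j))
    {P : ℝ≥0∞} (hP : P ≠ ⊤) (haP : ∀ j, a j 0 ≤ P) {ε : ℝ≥0∞} (hε : 0 < ε) :
    ∀ᶠ k₀ in atTop, ∀ k, ∃ᶠ j in atTop, a j k₀ ≤ a j k + ε := by
  set ℓ : ℕ → ℝ≥0∞ := fun k => atTop.liminf fun j => a j k
  have hℓ : Antitone ℓ := fun k k' hkk' => liminf_le_liminf (.of_forall fun j => ha j hkk')
  have hℓfin : ∀ k, ℓ k ≠ ⊤ := fun k => ne_top_of_le_ne_top hP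
    (liminf_le_of_frequently_le (.of_forall fun j => (ha j (Nat.zero_le k)).trans (haP j)))
  have hε3 : 0 < ε / 3 := ENNReal.div_pos hε.ne' (by norm_num)
  obtain ⟨k₁, hk₁⟩ : ∃ k₁, ℓ k₁ < (⨅ k, ℓ k) + ε / 3 :=
    iInf_lt_iff.1 (ENNReal.lt_add_right (ne_top_of_le_ne_top (hℓfin 0) (iInf_le ℓ 0)) hε3.ne')
  filter_upwards [eventually_ge_atTop k₁] with k₀ hk₀ k
  set k' := max k k₀
  have hfreq : ∃ᶠ j in atTop, a j k₀ < ℓ k₀ + ε / 3 :=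
    frequently_lt_of_liminf_lt (by isBoundedDefault) (ENNReal.lt_add_right (hℓfin k₀) hε3.ne')
  have hev : ∀ᶠ j in atTop, ℓ k' ≤ a j k' + ε / 3 := by
    rcases eq_or_ne (ℓ k') 0 with h0 | h0
    · exact .of_forall fun j => by simp [h0]
    · exact (eventually_lt_of_lt_liminf (ENNReal.sub_lt_self (hℓfin k') h0 hε3.ne')).mono
        fun j hj => tsub_le_iff_right.1 hj.le
  refine (hfreq.and_eventually hev).mono fun j ⟨hj₀, hj'⟩ => ?_
  calc a j k₀ ≤ ℓ k₀ + ε / 3 := hj₀.le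
    _ ≤ (⨅ k, ℓ k) + ε / 3 + ε / 3 := by gcongr; exact (hℓ hk₀).trans hk₁.le
    _ ≤ ℓ k' + ε / 3 + ε / 3 := by gcongr; exact iInf_le ℓ k'
    _ ≤ a j k' + ε / 3 + ε / 3 + ε / 3 := by gcongr
    _ = a j k' + ε := by rw [add_assoc, add_assoc, ← add_assoc (ε / 3), ENNReal.add_thirds]
    _ ≤ a j k + ε := by gcongr; exact ha j (le_max_left k k₀)

lemma lipschitzWith_coord (i : Fin 2) : LipschitzWith 1 fun p : Plane => p i :=
  LipschitzWith.of_dist_le_mul fun p q => by simpa using PiLp.dist_apply_le p q i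

lemma measurable_coord (i : Fin 2) : Measurable fun p : Plane => p i :=
  (lipschitzWith_coord i).continuous.measurable

lemma wfun_le_ofReal_neg {p : Plane} (h₁ : -1 ≤ p 1) (h₂ : p 1 ≤ 0) :
    wfun p ≤ ENNReal.ofReal (-p 1) := by
  rw [wfun, if_pos ⟨h₁, h₂⟩]
  refine ENNReal.ofReal_le_ofReal ((min_le_right _ _).trans ?_)
  calc infDist p {q : Plane | q 1 = -1 ∨ q 1 = 0} ≤ dist p (pt (p 0) 0) :=
        infDist_le_dist_of_mem (Or.inr rfl)
    _ = -p 1 := by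
        rw [EuclideanSpace.dist_eq, Fin.sum_univ_two]
        simp [pt, Real.sqrt_sq_eq_abs, abs_of_nonpos h₂]

/-- The atoms of `mws` lie on the axis `y = 0`. -/
lemma mws_apply_of_subset_lowerHalf {T : Set Plane} (hT : MeasurableSet T)
    (hTneg : T ⊆ {p | p 1 < 0}) : mws T = ∫⁻ p in T, wfun p := by
  have hx : ∀ k, xpt (k + 1) ∉ T := fun k hk => (lt_irrefl (0 : ℝ)) (hTneg hk)
  simp [mws, Measure.sum_apply _ hT, withDensity_apply _ hT, Measure.dirac_apply' _ hT, hx]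

lemma volume_coord_mem_and_mem {I J : Set ℝ} (hI : MeasurableSet I) (hJ : MeasurableSet J) :
    volume {p : Plane | p 0 ∈ I ∧ p 1 ∈ J} = volume I * volume J := by
  have hpre : (MeasurableEquiv.toLp 2 (Fin 2 → ℝ)).symm ⁻¹' univ.pi ![I, J] =
      {p : Plane | p 0 ∈ I ∧ p 1 ∈ J} := by
    ext p; simp [Fin.forall_fin_two]
  have hm : MeasurableSet (univ.pi ![I, J]) :=
    MeasurableSet.univ_pi fun i => by fin_cases i <;> assumption
  rw [← hpre, (EuclideanSpace.volume_preserving_symm_measurableEquiv_toLp (Fin 2)).measure_preimage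
    hm.nullMeasurableSet, volume_pi_pi, Fin.prod_univ_two]
  rfl

lemma mws_coord_mem_and_mem_le {I J : Set ℝ} (hI : MeasurableSet I) (hJ : MeasurableSet J)
    {s : ℝ} (hs : s ≤ 1) (hJs : J ⊆ Ico (-s) 0) :
    mws {p : Plane | p 0 ∈ I ∧ p 1 ∈ J} ≤ ENNReal.ofReal s * (volume I * volume J) := by
  have hm : MeasurableSet {p : Plane | p 0 ∈ I ∧ p 1 ∈ J} :=
    (measurable_coord 0 hI).inter (measurable_coord 1 hJ)
  rw [mws_apply_of_subset_lowerHalf hm fun p hp => (hJs hp.2).2, ← volume_coord_mem_and_mem hI hJ,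
    ← setLIntegral_const]
  refine setLIntegral_mono' hm fun p hp => (wfun_le_ofReal_neg ?_ (hJs hp.2).2.le).trans ?_
  · linarith [(hJs hp.2).1]
  · exact ENNReal.ofReal_le_ofReal (by linarith [(hJs hp.2).1])

def lowerStrip (s : ℝ) : Set Plane := {p | -s < p 1 ∧ p 1 < 0}

def lowerBand (c d : ℝ) : Set Plane := {p | -c < p 1 ∧ p 1 ≤ -d}

def transitionBand (δ : ℝ) : Set Plane := {p | -δ ≤ p 1 ∧ p 1 ≤ -(δ / 2)}

/-- An open neighbourhood of `Hup` that thins out as `|x| → ∞`, so that, unlike the full strip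
below `Hup`, its part in every `transitionBand δ` has small `mws`-measure. -/
def sliver (c : ℝ) : Set Plane := {p | -c / (1 + p 0 ^ 2) < p 1}

lemma measurableSet_lowerBand (c d : ℝ) : MeasurableSet (lowerBand c d) :=
  (measurable_coord 1 measurableSet_Ioi).inter (measurable_coord 1 measurableSet_Iic)

lemma setLIntegral_lowerStrip (μ : Measure Plane) (f : Plane → ℝ≥0∞) {c d : ℝ} (hd : 0 < d)
    (hdc : d ≤ c) :
    ∫⁻ p in lowerStrip c, f p ∂μ =
      ∫⁻ p in lowerStrip d, f p ∂μ + ∫⁻ p in lowerBand c d, f p ∂μ := by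
  have hunion : lowerStrip c = lowerStrip d ∪ lowerBand c d := by
    ext p
    simp only [lowerStrip, lowerBand, mem_union, mem_ofPred_eq]
    constructor
    · rintro ⟨h₁, h₂⟩
      by_cases h : p 1 ≤ -d
      · exact Or.inr ⟨h₁, h⟩
      · exact Or.inl ⟨lt_of_not_ge h, h₂⟩
    · rintro (⟨h₁, h₂⟩ | ⟨h₁, h₂⟩) <;> constructor <;> linarith
  have hdisj : Disjoint (lowerStrip d) (lowerBand c d) :=
    disjoint_left.2 fun p h₁ h₂ => by linarith [h₁.1, h₂.2]
  rw [hunion, Measure.restrict_union hdisj (measurableSet_lowerBand c d), lintegral_add_measure]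

lemma mws_closedBall_inter_lowerStrip_le (R : ℝ) {s : ℝ} (hs₀ : 0 ≤ s) (hs₁ : s ≤ 1) :
    mws (closedBall (0 : Plane) R ∩ lowerStrip s) ≤ ENNReal.ofReal (s * (2 * R * s)) := by
  have hsub : closedBall (0 : Plane) R ∩ lowerStrip s ⊆
      {p : Plane | p 0 ∈ Icc (-R) R ∧ p 1 ∈ Ioo (-s) 0} := by
    rintro p ⟨hR, hs⟩
    have h₀ : |p 0| ≤ R := by
      simpa using (PiLp.dist_apply_le p 0 0).trans (mem_closedBall.1 hR)
    exact ⟨abs_le.1 h₀, hs⟩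
  refine (measure_mono hsub).trans <| (mws_coord_mem_and_mem_le measurableSet_Icc
    measurableSet_Ioo hs₁ Ioo_subset_Ico_self).trans_eq ?_
  rw [Real.volume_Icc, Real.volume_Ioo, ← ENNReal.ofReal_mul' (by linarith : (0 : ℝ) ≤ 0 - -s),
    ← ENNReal.ofReal_mul hs₀]
  ring_nf

lemma isOpen_sliver (c : ℝ) : IsOpen (sliver c) :=
  isOpen_lt (continuous_const.div (continuous_const.add ((lipschitzWith_coord 0).continuous.pow 2))
    fun p => by positivity) (lipschitzWith_coord 1).continuous

lemma Hup_subset_sliver {c : ℝ} (hc : 0 < c) : Hup ⊆ sliver c := fun p (hp : 0 ≤ p 1) =>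
  (div_neg_of_neg_of_pos (neg_neg_of_pos hc) (by positivity)).trans_le hp

lemma sliver_subset {c : ℝ} (hc : 0 ≤ c) : sliver c ⊆ {p | -c < p 1} := fun p hp =>
  lt_of_le_of_lt (show -c ≤ -c / (1 + p 0 ^ 2) by
    rw [neg_div, neg_le_neg_iff]; exact div_le_self hc (by nlinarith)) hp

lemma mws_sliver_inter_transitionBand_le {c δ : ℝ} (hc : 0 < c) (hδ : 0 < δ) (hδ₁ : δ ≤ 1) :
    mws (sliver c ∩ transitionBand δ) ≤ ENNReal.ofReal (δ * √(2 * c * δ)) := by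
  set X := √(2 * c / δ)
  have hsub : sliver c ∩ transitionBand δ ⊆
      {p : Plane | p 0 ∈ Icc (-X) X ∧ p 1 ∈ Icc (-δ) (-(δ / 2))} := by
    rintro p ⟨hp, hb₁, hb₂⟩
    replace hp : -c / (1 + p 0 ^ 2) < p 1 := hp
    refine ⟨abs_le.1 (Real.abs_le_sqrt ?_), hb₁, hb₂⟩
    have h₁ : (0 : ℝ) < 1 + p 0 ^ 2 := by positivity
    rw [le_div_iff₀ hδ]
    rw [div_lt_iff₀ h₁] at hp
    nlinarith
  refine (measure_mono hsub).trans <| (mws_coord_mem_and_mem_le measurableSet_Icc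
    measurableSet_Icc hδ₁ fun t ht => ⟨ht.1, by linarith [ht.2]⟩).trans_eq ?_
  rw [Real.volume_Icc, Real.volume_Icc,
    ← ENNReal.ofReal_mul (by linarith [Real.sqrt_nonneg (2 * c / δ)] : (0 : ℝ) ≤ X - -X),
    ← ENNReal.ofReal_mul hδ.le]
  congr 1
  have hX : X * δ = √(2 * c * δ) := by
    rw [show 2 * c * δ = 2 * c / δ * δ ^ 2 by field_simp, Real.sqrt_mul (by positivity),
      Real.sqrt_sq hδ.le]
  linear_combination δ * hX

noncomputable def clamp01 (t : ℝ) : ℝ := projIcc 0 1 zero_le_one t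

lemma clamp01_mem (t : ℝ) : clamp01 t ∈ Icc (0 : ℝ) 1 := (projIcc 0 1 zero_le_one t).2

lemma abs_clamp01_le (t : ℝ) : |clamp01 t| ≤ 1 :=
  abs_le.2 ⟨by linarith [(clamp01_mem t).1], (clamp01_mem t).2⟩

lemma clamp01_of_mem {t : ℝ} (ht : t ∈ Icc (0 : ℝ) 1) : clamp01 t = t := by
  simp [clamp01, projIcc_of_mem _ ht]

lemma lipschitzWith_clamp01 : LipschitzWith 1 clamp01 := by
  have h := (LipschitzWith.subtype_val (Icc (0 : ℝ) 1)).comp (LipschitzWith.projIcc zero_le_one)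
  rwa [mul_one] at h

lemma abs_clamp01_sub_le {s t : ℝ} (ht : t ∈ Icc (0 : ℝ) 1) : |clamp01 s - t| ≤ |s - t| := by
  simpa [clamp01_of_mem ht, Real.dist_eq] using lipschitzWith_clamp01.dist_le_mul s t

lemma lipschitzWith_one_sub : LipschitzWith 1 fun t : ℝ => 1 - t :=
  LipschitzWith.of_dist_le_mul fun s t => by
    rw [Real.dist_eq, Real.dist_eq, show 1 - s - (1 - t) = -(s - t) by ring, abs_neg,
      NNReal.coe_one, one_mul]

noncomputable def cutoff (δ : ℝ) (p : Plane) : ℝ := clamp01 (2 * p 1 / δ + 2)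

noncomputable def glue (δ : ℝ) (g v : Plane → ℝ) (p : Plane) : ℝ :=
  cutoff δ p * clamp01 (g p) + (1 - cutoff δ p) * clamp01 (v p)

section Glue

variable {δ : ℝ} {g v : Plane → ℝ}

lemma cutoff_eq_one (hδ : 0 < δ) {p : Plane} (hp : -(δ / 2) ≤ p 1) : cutoff δ p = 1 := by
  have : 1 ≤ 2 * p 1 / δ + 2 := by
    rw [← sub_nonneg, show 2 * p 1 / δ + 2 - 1 = 2 * (p 1 + δ / 2) / δ by field_simp; ring]
    exact div_nonneg (by linarith) hδ.le
  simp [cutoff, clamp01, projIcc_of_right_le _ this]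

lemma cutoff_eq_zero (hδ : 0 < δ) {p : Plane} (hp : p 1 ≤ -δ) : cutoff δ p = 0 := by
  have : 2 * p 1 / δ + 2 ≤ 0 := by
    rw [show 2 * p 1 / δ + 2 = 2 * (p 1 + δ) / δ by field_simp]
    exact div_nonpos_of_nonpos_of_nonneg (by linarith) hδ.le
  simp [cutoff, clamp01, projIcc_of_le_left _ this]

lemma lipschitzWith_cutoff (hδ : 0 < δ) : LipschitzWith (2 / δ).toNNReal (cutoff δ) := by
  have haff : LipschitzWith (2 / δ).toNNReal fun p : Plane => 2 * p 1 / δ + 2 :=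
    LipschitzWith.of_dist_le_mul fun p q => by
      rw [Real.dist_eq, Real.coe_toNNReal _ (by positivity),
        show 2 * p 1 / δ + 2 - (2 * q 1 / δ + 2) = 2 / δ * (p 1 - q 1) by ring, abs_mul,
        abs_of_pos (by positivity)]
      gcongr
      simpa [Real.dist_eq] using PiLp.dist_apply_le p q 1
  have h := lipschitzWith_clamp01.comp haff
  rwa [one_mul] at h

lemma lipa_cutoff_le (hδ : 0 < δ) (p : Plane) :
    lipa (cutoff δ) p ≤ (transitionBand δ).indicator (fun _ => ENNReal.ofReal (2 / δ)) p := by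
  by_cases hp : p ∈ transitionBand δ
  · rw [indicator_of_mem hp]
    exact (lipschitzWith_cutoff hδ).lipa_le p
  · have hcoord := (lipschitzWith_coord 1).continuous.tendsto p
    simp only [transitionBand, mem_ofPred_eq, not_and_or, not_le] at hp
    rcases hp with hp | hp
    · rw [lipa_congr (g := fun _ => 0) ((hcoord.eventually (eventually_lt_nhds hp)).mono
        fun q hq => cutoff_eq_zero hδ hq.le), lipa_const]
      exact zero_le
    · rw [lipa_congr (g := fun _ => 1) ((hcoord.eventually (eventually_gt_nhds hp)).mono
        fun q hq => cutoff_eq_one hδ hq.le), lipa_const]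
      exact zero_le

lemma cutoff_mem (δ : ℝ) (p : Plane) : cutoff δ p ∈ Icc (0 : ℝ) 1 := clamp01_mem _

lemma glue_mem (p : Plane) : glue δ g v p ∈ Icc (0 : ℝ) 1 := by
  obtain ⟨h₁, h₂⟩ := cutoff_mem δ p
  obtain ⟨h₃, h₄⟩ := clamp01_mem (g p)
  obtain ⟨h₅, h₆⟩ := clamp01_mem (v p)
  constructor <;> simp only [glue] <;> nlinarith

lemma glue_of_neg_half_le (hδ : 0 < δ) {p : Plane} (hp : -(δ / 2) ≤ p 1) :
    glue δ g v p = clamp01 (g p) := by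
  simp [glue, cutoff_eq_one hδ hp]

lemma glue_of_le_neg (hδ : 0 < δ) {p : Plane} (hp : p 1 ≤ -δ) :
    glue δ g v p = clamp01 (v p) := by
  simp [glue, cutoff_eq_zero hδ hp]

lemma abs_one_sub_cutoff_le (δ : ℝ) (p : Plane) : |1 - cutoff δ p| ≤ 1 :=
  abs_le.2 ⟨by linarith [(cutoff_mem δ p).2], by linarith [(cutoff_mem δ p).1]⟩

lemma abs_cutoff_le (δ : ℝ) (p : Plane) : |cutoff δ p| ≤ 1 :=
  abs_le.2 ⟨by linarith [(cutoff_mem δ p).1], (cutoff_mem δ p).2⟩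

lemma LocLipOn.glue (hδ : 0 < δ) {A : Set Plane} (hA : IsOpen A) (hg : LocLipOn g A)
    (hv : LocLipOn v A) : LocLipOn (glue δ g v) A := by
  have hχ := (lipschitzWith_cutoff hδ).locLipOn hA
  exact (hχ.mul_of_abs_le_one (lipschitzWith_clamp01.comp_locLipOn hg) (abs_cutoff_le δ)
    fun _ => abs_clamp01_le _).add ((lipschitzWith_one_sub.comp_locLipOn hχ).mul_of_abs_le_one
    (lipschitzWith_clamp01.comp_locLipOn hv) (abs_one_sub_cutoff_le δ) fun _ => abs_clamp01_le _)

lemma lipa_glue_le (hδ : 0 < δ) (p : Plane) :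
    lipa (glue δ g v) p ≤ lipa g p + {q : Plane | q 1 ≤ -(δ / 2)}.indicator (lipa v) p +
      2 * (transitionBand δ).indicator (fun _ => ENNReal.ofReal (2 / δ)) p := by
  set K := (transitionBand δ).indicator (fun _ => ENNReal.ofReal (2 / δ)) p
  have hg : lipa (fun q => cutoff δ q * clamp01 (g q)) p ≤ lipa g p + K :=
    calc _ ≤ lipa (cutoff δ) p + lipa (fun q => clamp01 (g q)) p :=
          lipa_mul_le (abs_cutoff_le δ) (fun q => abs_clamp01_le _) p
      _ ≤ K + lipa g p := add_le_add (lipa_cutoff_le hδ p) (lipschitzWith_clamp01.lipa_comp_le g p)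
      _ = lipa g p + K := add_comm _ _
  have hv : lipa (fun q => (1 - cutoff δ q) * clamp01 (v q)) p ≤
      {q : Plane | q 1 ≤ -(δ / 2)}.indicator (lipa v) p + K := by
    by_cases hp : p 1 ≤ -(δ / 2)
    · rw [indicator_of_mem (show p ∈ {q : Plane | q 1 ≤ -(δ / 2)} from hp), add_comm]
      calc _ ≤ lipa (fun q => 1 - cutoff δ q) p + lipa (fun q => clamp01 (v q)) p :=
            lipa_mul_le (abs_one_sub_cutoff_le δ) (fun q => abs_clamp01_le _) p
        _ ≤ K + lipa v p := add_le_add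
            ((lipschitzWith_one_sub.lipa_comp_le _ p).trans (lipa_cutoff_le hδ p))
            (lipschitzWith_clamp01.lipa_comp_le v p)
    · have hnear : (fun q => (1 - cutoff δ q) * clamp01 (v q)) =ᶠ[𝓝 p] fun _ => 0 :=
        (((lipschitzWith_coord 1).continuous.tendsto p).eventually
          (eventually_gt_nhds (lt_of_not_ge hp))).mono fun q hq => by
            simp [cutoff_eq_one hδ hq.le]
      rw [lipa_congr hnear, lipa_const]
      exact zero_le
  calc lipa (glue δ g v) p ≤ lipa (fun q => cutoff δ q * clamp01 (g q)) p +
        lipa (fun q => (1 - cutoff δ q) * clamp01 (v q)) p := lipa_add_le _ _ p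
    _ ≤ (lipa g p + K) + ({q : Plane | q 1 ≤ -(δ / 2)}.indicator (lipa v) p + K) :=
        add_le_add hg hv
    _ = _ := by ring

end Glue

lemma lintegral_le_of_le_on_pieces {α : Type*} [MeasurableSpace α] {μ : Measure α}
    {s t : Set α} (hs : MeasurableSet s) (ht : MeasurableSet t) {f a b : α → ℝ≥0∞}
    (ha : ∀ x ∈ s, f x ≤ a x) (hb : ∀ x ∈ t, f x ≤ b x) (hf : ∀ x, f x ≤ 1) :
    ∫⁻ x, f x ∂μ ≤ ∫⁻ x in s, a x ∂μ + ∫⁻ x in t, b x ∂μ + μ (sᶜ \ t) := by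
  rw [← lintegral_add_compl f hs, ← lintegral_inter_add_sdiff f sᶜ ht, ← add_assoc]
  refine add_le_add (add_le_add (setLIntegral_mono' hs ha) ?_) ?_
  · exact (setLIntegral_mono' (hs.compl.inter ht) fun x hx => hb x hx.2).trans
      (lintegral_mono_set inter_subset_right)
  · calc ∫⁻ x in sᶜ \ t, f x ∂μ ≤ ∫⁻ _ in sᶜ \ t, 1 ∂μ := lintegral_mono hf
      _ = μ (sᶜ \ t) := by simp

lemma measurableSet_transitionBand (δ : ℝ) : MeasurableSet (transitionBand δ) :=
  (measurable_coord 1 measurableSet_Ici).inter (measurable_coord 1 measurableSet_Iic)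

lemma setLIntegral_lipa_glue_le (μ : Measure Plane) {δ c : ℝ} (hδ : 0 < δ) {g v : Plane → ℝ}
    {S : Set Plane} (hSc : S ⊆ {p | -c < p 1}) :
    ∫⁻ p in S, lipa (glue δ g v) p ∂μ ≤ ∫⁻ p in S, lipa g p ∂μ +
      ∫⁻ p in lowerBand c (δ / 2), lipa v p ∂μ +
      2 * ENNReal.ofReal (2 / δ) * μ (S ∩ transitionBand δ) := by
  have hL : MeasurableSet {q : Plane | q 1 ≤ -(δ / 2)} := measurable_coord 1 measurableSet_Iic
  calc ∫⁻ p in S, lipa (glue δ g v) p ∂μ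
      ≤ ∫⁻ p in S, (lipa g p + {q : Plane | q 1 ≤ -(δ / 2)}.indicator (lipa v) p +
          2 * (transitionBand δ).indicator (fun _ => ENNReal.ofReal (2 / δ)) p) ∂μ :=
        lintegral_mono fun p => lipa_glue_le hδ p
    _ = ∫⁻ p in S, lipa g p ∂μ + ∫⁻ p in S ∩ {q : Plane | q 1 ≤ -(δ / 2)}, lipa v p ∂μ +
          2 * ENNReal.ofReal (2 / δ) * μ (S ∩ transitionBand δ) := by
        rw [lintegral_add_right _ ((measurable_const.indicator
            (measurableSet_transitionBand δ)).const_mul 2),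
          lintegral_add_left (measurable_lipa g), lintegral_indicator hL,
          Measure.restrict_restrict hL, lintegral_const_mul _ ((measurable_const.indicator
            (measurableSet_transitionBand δ))), lintegral_indicator_const
            (measurableSet_transitionBand δ),
          Measure.restrict_apply (measurableSet_transitionBand δ),
          inter_comm {q : Plane | q 1 ≤ -(δ / 2)}, inter_comm (transitionBand δ), mul_assoc]
    _ ≤ _ := by
        have hband : S ∩ {q : Plane | q 1 ≤ -(δ / 2)} ⊆ lowerBand c (δ / 2) :=
          fun p hp => ⟨hSc hp.1, hp.2⟩
        gcongr

lemma tendstoL1loc_glue {A : Set Plane} {f ftop : Plane → ℝ} (hf : ∀ p, f p ∈ Icc (0 : ℝ) 1)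
    (hftop : EqOn ftop f Hup) {g v : ℕ → Plane → ℝ} (hgf : TendstoL1loc (mws.restrict A) g ftop)
    {δ : ℕ → ℝ} (hδ : ∀ n, δ n ∈ Ioc (0 : ℝ) 1) (hδ0 : Tendsto δ atTop (𝓝 0))
    (hvf : ∀ R, Tendsto (fun n => ∫⁻ p in closedBall (0 : Plane) R ∩ {q | q 1 ≤ -δ n},
      ENNReal.ofReal |v n p - f p| ∂mws) atTop (𝓝 0)) :
    TendstoL1loc (mws.restrict A) (fun n => glue (δ n) (g n) (v n)) f := by
  intro S hS
  obtain ⟨R, hSR⟩ := (isBounded_iff_subset_closedBall (0 : Plane)).1 hS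
  set D := closedBall (0 : Plane) R
  have hstrip : Tendsto (fun n => ENNReal.ofReal (δ n * (2 * R * δ n))) atTop (𝓝 0) := by
    simpa using ENNReal.tendsto_ofReal (hδ0.mul ((hδ0.const_mul (2 * R))))
  refine tendsto_of_tendsto_of_tendsto_of_le_of_le tendsto_const_nhds
    (by simpa using ((hgf D isBounded_closedBall).add hstrip).add (hvf R))
    (fun _ => zero_le) fun n => ?_
  have hH : MeasurableSet Hup := measurable_coord 1 measurableSet_Ici
  have hL : MeasurableSet {q : Plane | q 1 ≤ -δ n} := measurable_coord 1 measurableSet_Iic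
  obtain ⟨hδn, hδn1⟩ := hδ n
  calc ∫⁻ p in S, ENNReal.ofReal |glue (δ n) (g n) (v n) p - f p| ∂mws.restrict A
      ≤ ∫⁻ p in D, ENNReal.ofReal |glue (δ n) (g n) (v n) p - f p| ∂mws.restrict A :=
        lintegral_mono_set hSR
    _ ≤ ∫⁻ p in Hup, ENNReal.ofReal |g n p - ftop p| ∂(mws.restrict A).restrict D +
        ∫⁻ p in {q : Plane | q 1 ≤ -δ n}, ENNReal.ofReal |v n p - f p|
          ∂(mws.restrict A).restrict D +
        (mws.restrict A).restrict D (Hupᶜ \ {q : Plane | q 1 ≤ -δ n}) := by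
        refine lintegral_le_of_le_on_pieces hH hL (fun p (hp : 0 ≤ p 1) => ?_) (fun p hp => ?_)
          fun p => ?_
        · rw [glue_of_neg_half_le hδn (by linarith), ← hftop hp]
          exact ENNReal.ofReal_le_ofReal (abs_clamp01_sub_le (hftop hp ▸ hf p))
        · rw [glue_of_le_neg hδn hp]
          exact ENNReal.ofReal_le_ofReal (abs_clamp01_sub_le (hf p))
        · obtain ⟨h₁, h₂⟩ := glue_mem (δ := δ n) (g := g n) (v := v n) p
          obtain ⟨h₃, h₄⟩ := hf p
          exact ENNReal.ofReal_le_one.2 (abs_sub_le_iff.2 ⟨by linarith, by linarith⟩)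
    _ ≤ ∫⁻ p in D, ENNReal.ofReal |g n p - ftop p| ∂mws.restrict A +
        ∫⁻ p in D ∩ {q | q 1 ≤ -δ n}, ENNReal.ofReal |v n p - f p| ∂mws +
        ENNReal.ofReal (δ n * (2 * R * δ n)) := by
        have hv : ((mws.restrict A).restrict D).restrict {q : Plane | q 1 ≤ -δ n} ≤
            mws.restrict (D ∩ {q | q 1 ≤ -δ n}) := by
          rw [Measure.restrict_restrict hL, inter_comm]
          exact Measure.restrict_mono subset_rfl Measure.restrict_le_self
        have hstrip : (mws.restrict A).restrict D (Hupᶜ \ {q : Plane | q 1 ≤ -δ n}) ≤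
            mws (D ∩ lowerStrip (δ n)) := by
          refine (Measure.restrict_mono subset_rfl Measure.restrict_le_self _).trans ?_
          rw [Measure.restrict_apply' measurableSet_closedBall, inter_comm]
          refine measure_mono fun p ⟨hp, hpH, hpL⟩ => ⟨hp, ?_, ?_⟩
          · exact lt_of_not_ge hpL
          · exact lt_of_not_ge hpH
        exact add_le_add (add_le_add (lintegral_mono' Measure.restrict_le_self le_rfl)
          (lintegral_mono' hv le_rfl))
          (hstrip.trans (mws_closedBall_inter_lowerStrip_le R hδn.le hδn1))
    _ = _ := add_right_comm _ _ _

lemma tendsto_band_energy {c : ℝ} (hc : 0 < c) {δ : ℕ → ℝ} (hδ : ∀ n, δ n ∈ Ioc (0 : ℝ) 1)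
    (hδ0 : Tendsto δ atTop (𝓝 0)) :
    Tendsto (fun n => 2 * ENNReal.ofReal (2 / δ n) * mws (sliver c ∩ transitionBand (δ n)))
      atTop (𝓝 0) := by
  have hlim : Tendsto (fun n => ENNReal.ofReal (4 * √(2 * c * δ n))) atTop (𝓝 0) := by
    have h := ENNReal.tendsto_ofReal
      (((Real.continuous_sqrt.tendsto _).comp (hδ0.const_mul (2 * c))).const_mul 4)
    simpa [Function.comp_def] using h
  refine tendsto_of_tendsto_of_tendsto_of_le_of_le tendsto_const_nhds hlim (fun _ => zero_le)
    fun n => ?_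
  obtain ⟨hδn, hδn1⟩ := hδ n
  calc 2 * ENNReal.ofReal (2 / δ n) * mws (sliver c ∩ transitionBand (δ n))
      ≤ 2 * ENNReal.ofReal (2 / δ n) * ENNReal.ofReal (δ n * √(2 * c * δ n)) := by
        gcongr; exact mws_sliver_inter_transitionBand_le hc hδn hδn1
    _ = ENNReal.ofReal (4 * √(2 * c * δ n)) := by
        rw [← ENNReal.ofReal_ofNat 2, ← ENNReal.ofReal_mul (by norm_num),
          ← ENNReal.ofReal_mul (by positivity)]
        congr 1
        field_simp
        ring

theorem totVar_Hup_le_of_glue {f ftop : Plane → ℝ} (hf : ∀ p, f p ∈ Icc (0 : ℝ) 1)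
    (hftop : EqOn ftop f Hup) {A : Set Plane} (hA : IsOpen A) (hHA : Hup ⊆ A)
    {g : ℕ → Plane → ℝ} (hg : ∀ n, LocLipOn (g n) A) (hgf : TendstoL1loc (mws.restrict A) g ftop)
    {c : ℝ} (hc : 0 < c) {v : ℕ → Plane → ℝ} (hv : ∀ n, LocLipOn (v n) univ)
    {δ : ℕ → ℝ} (hδ : ∀ n, δ n ∈ Ioc (0 : ℝ) 1) (hδ0 : Tendsto δ atTop (𝓝 0))
    (hvf : ∀ R, Tendsto (fun n => ∫⁻ p in closedBall (0 : Plane) R ∩ {q | q 1 ≤ -δ n},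
      ENNReal.ofReal |v n p - f p| ∂mws) atTop (𝓝 0))
    {B : ℝ≥0∞} (hvB : ∀ n, ∫⁻ p in lowerBand c (δ n / 2), lipa (v n) p ∂mws ≤ B) :
    totVar mws f Hup ≤ (atTop.liminf fun n => ∫⁻ p in A, lipa (g n) p ∂mws) + B := by
  have hU : IsOpen (A ∩ sliver c) := hA.inter (isOpen_sliver c)
  have henergy : ∀ n, ∫⁻ p in A ∩ sliver c, lipa (glue (δ n) (g n) (v n)) p ∂mws ≤
      ∫⁻ p in A, lipa (g n) p ∂mws + B +
        2 * ENNReal.ofReal (2 / δ n) * mws (sliver c ∩ transitionBand (δ n)) := fun n => by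
    refine (setLIntegral_lipa_glue_le mws (hδ n).1
      (inter_subset_right.trans (sliver_subset hc.le))).trans ?_
    gcongr
    · exact inter_subset_left
    · exact hvB n
    · exact inter_subset_right
  calc totVar mws f Hup ≤ totVarOpen mws f (A ∩ sliver c) :=
        totVar_le_totVarOpen hU (subset_inter hHA (Hup_subset_sliver hc))
    _ ≤ atTop.liminf fun n => ∫⁻ p in A ∩ sliver c, lipa (glue (δ n) (g n) (v n)) p ∂mws :=
        totVarOpen_le_liminf
          (fun n => ((hg n).mono hU inter_subset_left).glue (hδ n).1 hU ((hv n).mono hU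
            (subset_univ _)))
          ((tendstoL1loc_glue hf hftop hgf hδ hδ0 hvf).mono
            (Measure.restrict_mono inter_subset_left le_rfl))
    _ ≤ _ := liminf_le_liminf_add_of_tendsto (tendsto_band_energy hc hδ hδ0) (.of_forall henergy)

lemma indicator_one_mem_Icc (E : Set Plane) (p : Plane) :
    E.indicator (1 : Plane → ℝ) p ∈ Icc (0 : ℝ) 1 := by
  by_cases h : p ∈ E <;> simp [h]

lemma eqOn_indicator_inter_Hup (E : Set Plane) :
    EqOn (E.indicator (1 : Plane → ℝ)) ((E ∩ Hup).indicator 1) Hup := fun p hp => by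
  by_cases h : p ∈ E <;> simp [h, hp]

lemma perIn_inter_Hup_le (A : Set Plane) : perIn mws (A ∩ Hup) Hup ≤ perIn mws A Hup := by
  have hδ : ∀ n : ℕ, (1 : ℝ) / (n + 1) ∈ Ioc (0 : ℝ) 1 := fun n =>
    ⟨Nat.one_div_pos_of_nat, div_le_self zero_le_one (by linarith [n.cast_nonneg (α := ℝ)])⟩
  have hvf : ∀ (R : ℝ) (n : ℕ), ∫⁻ p in closedBall (0 : Plane) R ∩ {q | q 1 ≤ -(1 / (n + 1))},
      ENNReal.ofReal |0 - (A ∩ Hup).indicator 1 p| ∂mws = 0 := fun R n => by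
    refine (setLIntegral_congr_fun (measurableSet_closedBall.inter
      (measurable_coord 1 measurableSet_Iic)) fun p hp => ?_).trans lintegral_zero
    have hp₁ : p 1 ≤ -(1 / (n + 1)) := hp.2
    have hpH : p ∉ A ∩ Hup := fun h => by linarith [show (0 : ℝ) ≤ p 1 from h.2, (hδ n).1]
    simp [hpH]
  simpa only [perIn, add_zero] using totVar_le_totVar_add (e := 0) fun U hU hHU g hg hgf =>
    totVar_Hup_le_of_glue (indicator_one_mem_Icc _) (eqOn_indicator_inter_Hup A) hU hHU hg hgf
      one_pos (fun _ => (LipschitzWith.const (0 : ℝ)).locLipOn isOpen_univ) hδ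
      tendsto_one_div_add_atTop_nhds_zero_nat
      (fun R => by simp only [hvf R]; exact tendsto_const_nhds)
      (fun n => by simp [lipa_const])

lemma perIn_le_perIn_inter_Hup {A : Set Plane} (hA : per mws A < ⊤) :
    perIn mws A Hup ≤ perIn mws (A ∩ Hup) Hup := by
  obtain ⟨w, P, hP, hw, hwA, hwP⟩ := exists_seq_lintegral_lipa_le_of_totVar_lt_top hA
  refine ENNReal.le_of_forall_pos_le_add fun ε hε _ => ?_
  set a : ℕ → ℕ → ℝ≥0∞ := fun j k => ∫⁻ p in lowerStrip ((1 / 2 : ℝ) ^ k), lipa (w j) p ∂mws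
  have ha : ∀ j, Antitone (a j) := fun j k k' hkk' => lintegral_mono_set fun p hp =>
    ⟨(neg_le_neg (pow_le_pow_of_le_one (by norm_num) (by norm_num) hkk')).trans_lt hp.1, hp.2⟩
  obtain ⟨k₀, hk₀⟩ := (eventually_forall_frequently_le_add ha hP
    (fun j => (setLIntegral_le_lintegral _ _).trans (hwP j)) (ENNReal.coe_pos.2 hε)).exists
  obtain ⟨φ, hφ, hφε⟩ := extraction_forall_of_frequently fun n => hk₀ (n + k₀ + 1)
  set δ : ℕ → ℝ := fun n => (1 / 2) ^ (n + k₀)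
  have hδ : ∀ n, δ n ∈ Ioc (0 : ℝ) 1 := fun n =>
    ⟨by positivity, pow_le_one₀ (by norm_num) (by norm_num)⟩
  have hδ0 : Tendsto δ atTop (𝓝 0) :=
    (_root_.tendsto_pow_atTop_nhds_zero_of_lt_one (by norm_num) (by norm_num)).comp
      (tendsto_add_atTop_nat k₀)
  have hvB : ∀ n, ∫⁻ p in lowerBand ((1 / 2) ^ k₀) (δ n / 2), lipa (w (φ n)) p ∂mws ≤ ε := by
    intro n
    have hsplit := setLIntegral_lowerStrip mws (lipa (w (φ n))) (d := (1 / 2 : ℝ) ^ (n + k₀ + 1))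
      (c := (1 / 2) ^ k₀) (by positivity) (pow_le_pow_of_le_one (by norm_num) (by norm_num)
        (by omega))
    have hfin : a (φ n) (n + k₀ + 1) ≠ ⊤ :=
      ne_top_of_le_ne_top hP (((ha _) (Nat.zero_le _)).trans
        ((setLIntegral_le_lintegral _ _).trans (hwP _)))
    rw [show δ n / 2 = (1 / 2) ^ (n + k₀ + 1) by simp only [δ, pow_succ]; ring]
    exact (ENNReal.add_le_add_iff_left hfin).1 (hsplit ▸ hφε n)
  exact totVar_le_totVar_add fun U hU hHU g hg hgf =>
    totVar_Hup_le_of_glue (indicator_one_mem_Icc _) (eqOn_indicator_inter_Hup A).symm hU hHU hg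
      hgf (by positivity) (fun n => hw (φ n)) hδ hδ0
      (fun R => tendsto_of_tendsto_of_tendsto_of_le_of_le tendsto_const_nhds
        ((hwA _ isBounded_closedBall).comp hφ.tendsto_atTop) (fun _ => zero_le)
        fun _ => lintegral_mono_set inter_subset_left)
      hvB

theorem per_inter_halfplane_eq_general
    (A : Set Plane) (hAper : per mws A < ⊤) :
    perIn mws (A ∩ Hup) Hup = perIn mws A Hup :=
  le_antisymm (perIn_inter_Hup_le A) (perIn_le_perIn_inter_Hup hAper)

/-- In the weighted plane, for every Borel `A ⊆ Ω` of finite perimeter,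
`Per(A ∩ H; H) = Per(A; H)` where `H` is the closed upper half-plane. -/
theorem per_inter_halfplane_eq
    (A : Set Plane) (hA : A ⊆ Ωset) (hAm : MeasurableSet A) (hAper : per mws A < ⊤) :
    perIn mws (A ∩ Hup) Hup = perIn mws A Hup :=
  per_inter_halfplane_eq_general A hAper
end
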